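/- arXiv:1009.4120 — 4 statements merged into one kernel-verified Lean document; each statement's English description precedes it below -/
import Mathlib

section
/- Let C be a groupoid, let G be a group regarded as a one-object groupoid, and let Z be a set of objects of C such that every object of C admits a morphism to some object of Z. Let F1, F2 : C → G be functors such that F1(γ) = F2(γ) for every morphism γ of C whose source and target both lie in Z. Then there exists a function η from the objects of C to G such that η(z) = 1 for every z ∈ Z and, for every morphism γ : v → v' in C, one has F2(γ) = η(v') · F1(γ) · η(v)⁻¹. -/
open CategoryTheory

/-- Gauge equivalence: let `C` be a groupoid, `G` a group viewed as a one-object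
groupoid, and `Z` a set of objects of `C` such that every object admits a morphism
to some object of `Z`.  If two functors `F1, F2 : C ⥤ G` agree on all morphisms
whose source and target lie in `Z`, then they differ by a gauge `η : Ob C → G`
which is trivial on `Z`: `F2(γ) = η(v') · F1(γ) · η(v)⁻¹` for every `γ : v ⟶ v'`. -/
theorem stmt0 {C : Type*} [Groupoid C] {G : Type*} [Group G]
    (Z : Set C) (hZ : ∀ v : C, ∃ z ∈ Z, Nonempty (v ⟶ z))
    (F1 F2 : C ⥤ SingleObj G)
    (hF : ∀ (v v' : C), v ∈ Z → v' ∈ Z → ∀ γ : v ⟶ v',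
      (F1.map γ : G) = (F2.map γ : G)) :
    ∃ η : C → G, (∀ z ∈ Z, η z = 1) ∧
      ∀ (v v' : C) (γ : v ⟶ v'),
        (F2.map γ : G) = η v' * (F1.map γ : G) * (η v)⁻¹ := by
  choose z hzZ p using hZ
  have p' : ∀ v : C, v ⟶ z v := fun v => (p v).some
  refine ⟨fun v => (F2.map (p' v) : G)⁻¹ * (F1.map (p' v) : G), ?_, ?_⟩
  · intro w hw
    simp only [hF w (z w) hw (hzZ w) (p' w)]
    group
  · intro v v' γ
    have key := hF (z v) (z v') (hzZ v) (hzZ v')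
      (Groupoid.inv (p' v) ≫ γ ≫ p' v')
    simp only [Functor.map_comp, SingleObj.comp_as_mul] at key
    have inv1 : (F1.map (Groupoid.inv (p' v)) : G) = (F1.map (p' v) : G)⁻¹ := by
      rw [eq_inv_iff_mul_eq_one, ← SingleObj.comp_as_mul, ← Functor.map_comp,
        Groupoid.comp_inv, F1.map_id]
      rfl
    have inv2 : (F2.map (Groupoid.inv (p' v)) : G) = (F2.map (p' v) : G)⁻¹ := by
      rw [eq_inv_iff_mul_eq_one, ← SingleObj.comp_as_mul, ← Functor.map_comp,
        Groupoid.comp_inv, F2.map_id]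
      rfl
    rw [inv1, inv2] at key
    -- key : F1 p' * (F1 γ * (F1 p)⁻¹) = F2 p' * (F2 γ * (F2 p)⁻¹)
    have key' : (F2.map γ : G) =
        (F2.map (p' v') : G)⁻¹ * ((F1.map (p' v') : G) * (F1.map γ : G) *
          (F1.map (p' v) : G)⁻¹) * (F2.map (p' v) : G) := by
      rw [key]; group
    rw [key']; group
end

section
/- Let G be a group and X ⊆ G a symmetric subset (X = X⁻¹) which is small in G, i.e. for every finite family g1, …, gn ∈ G the union of left translates g1X ∪ … ∪ gnX is a proper subset of G. Let V and E be finite sets and let s, t : E → V satisfy s(e) ≠ t(e) for every e ∈ E (a finite loopless graph with vertex set V and edge set E). Let W ⊆ V and let Φ : E → G be such that Φ(e) ∉ X whenever both s(e) ∈ W and t(e) ∈ W. Then there exists a function η : V → G with η(w) = 1 for all w ∈ W such that the gauged coloring e ↦ η(s(e)) · Φ(e) · η(t(e))⁻¹ takes no value in X. -/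
/-!
Fix the vertices outside `W` one at a time. Re-gauging a single vertex `v` by `g` changes the
colour of an edge leaving `v` to `g * Φ e` and of an edge entering `v` to `Φ e * g⁻¹`, and leaves
every other edge alone (there are no loops). Since `X` is symmetric, `g * a ∈ X` means
`g⁻¹ ∈ a • X` and `a * g⁻¹ ∈ X` means `g⁻¹ ∈ a⁻¹ • X`; as the finitely many translates
`a • X`, `a⁻¹ • X` do not cover `G`, some `g` keeps every edge at `v` out of `X`.
-/

open Pointwise

namespace EdgeColoring

variable {G : Type*} [Group G] {V E : Type*} (s t : E → V)

def gauge (η : V → G) (Φ : E → G) : E → G := fun e => η (s e) * Φ e * (η (t e))⁻¹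

def AvoidsOn (X : Set G) (W : Set V) (Φ : E → G) : Prop :=
  ∀ e, s e ∈ W → t e ∈ W → Φ e ∉ X

theorem gauge_mul (η δ : V → G) (Φ : E → G) :
    gauge s t (η * δ) Φ = gauge s t η (gauge s t δ Φ) := by
  ext e
  simp only [gauge, Pi.mul_apply, mul_inv_rev, mul_assoc]

theorem exists_mul_notMem_and_mul_inv_notMem {X : Set G} (hsym : X⁻¹ = X)
    (hsmall : ∀ S : Finset G, (⋃ g ∈ S, g • X) ≠ Set.univ) (S : Finset G) :
    ∃ g : G, ∀ a ∈ S, g * a ∉ X ∧ a * g⁻¹ ∉ X := by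
  classical
  obtain ⟨k, hk⟩ := (Set.ne_univ_iff_exists_notMem _).mp (hsmall (S ∪ S⁻¹))
  have hk' : ∀ h ∈ S ∪ S⁻¹, h⁻¹ * k ∉ X := fun h hh hX =>
    hk (Set.mem_biUnion hh (Set.mem_smul_set_iff_inv_smul_mem.mpr hX))
  refine ⟨k⁻¹, fun a ha => ⟨fun hX => hk' a (by simp [ha]) ?_, fun hX => hk' a⁻¹ (by simp [ha]) ?_⟩⟩
  · rw [← hsym, Set.mem_inv]
    simpa using hX
  · simpa using hX

variable {s t}

theorem exists_gauge_mulSingle_avoidsOn_insert [DecidableEq V] [Fintype E] {X : Set G}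
    (hsym : X⁻¹ = X) (hsmall : ∀ S : Finset G, (⋃ g ∈ S, g • X) ≠ Set.univ)
    (hloop : ∀ e, s e ≠ t e) {W : Set V} {Φ : E → G} (hΦ : AvoidsOn s t X W Φ) (v : V) :
    ∃ g : G, AvoidsOn s t X (insert v W) (gauge s t (Pi.mulSingle v g) Φ) := by
  classical
  obtain ⟨g, hg⟩ := exists_mul_notMem_and_mul_inv_notMem hsym hsmall (Finset.univ.image Φ)
  refine ⟨g, fun e hs ht => ?_⟩
  obtain ⟨hleft, hright⟩ := hg (Φ e) (by simp)
  by_cases hsv : s e = v <;> by_cases htv : t e = v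
  · exact absurd (hsv.trans htv.symm) (hloop e)
  · simpa [gauge, hsv, Pi.mulSingle_eq_of_ne htv] using hleft
  · simpa [gauge, htv, Pi.mulSingle_eq_of_ne hsv] using hright
  · simpa [gauge, Pi.mulSingle_eq_of_ne hsv, Pi.mulSingle_eq_of_ne htv] using
      hΦ e (hs.resolve_left hsv) (ht.resolve_left htv)

theorem exists_gauge_notMem [Fintype E] {X : Set G} (hsym : X⁻¹ = X)
    (hsmall : ∀ S : Finset G, (⋃ g ∈ S, g • X) ≠ Set.univ) (hloop : ∀ e, s e ≠ t e)
    (U : Finset V) {Φ : E → G} (hΦ : AvoidsOn s t X (↑U)ᶜ Φ) :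
    ∃ η : V → G, (∀ w ∉ U, η w = 1) ∧ ∀ e, gauge s t η Φ e ∉ X := by
  classical
  induction U using Finset.induction_on generalizing Φ with
  | empty =>
    exact ⟨1, fun _ _ => rfl, fun e => by simpa [gauge] using hΦ e (by simp) (by simp)⟩
  | insert v U hv ih =>
    obtain ⟨g, hg⟩ := exists_gauge_mulSingle_avoidsOn_insert hsym hsmall hloop hΦ v
    have hcompl : insert v (↑(insert v U) : Set V)ᶜ = (↑U)ᶜ := by
      ext w
      by_cases hw : w = v <;> simp [hw, hv]
    obtain ⟨η, hη1, hη⟩ := ih (hcompl ▸ hg)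
    refine ⟨η * Pi.mulSingle v g, fun w hw => ?_, fun e => ?_⟩
    · rw [Finset.mem_insert, not_or] at hw
      simp [hη1 w hw.2, Pi.mulSingle_eq_of_ne hw.1]
    · rw [gauge_mul]
      exact hη e

end EdgeColoring

/-- Admissible colorings exist: let `X` be a symmetric subset of a group `G` that is
small (no finite union of left translates of `X` covers `G`).  Given a finite loopless
graph with edge-endpoint maps `s, t`, a set `W` of vertices, and a `G`-coloring `Φ` of
the edges that avoids `X` on edges with both endpoints in `W`, there is a gauge
`η : V → G`, trivial on `W`, such that the gauged coloring avoids `X` on all edges. -/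
theorem stmt1 {G : Type*} [Group G] (X : Set G) (hsym : X⁻¹ = X)
    (hsmall : ∀ S : Finset G, (⋃ g ∈ S, g • X) ≠ Set.univ)
    {V E : Type*} [Fintype V] [Fintype E] (s t : E → V) (hloop : ∀ e : E, s e ≠ t e)
    (W : Set V) (Φ : E → G) (hadm : ∀ e : E, s e ∈ W → t e ∈ W → Φ e ∉ X) :
    ∃ η : V → G, (∀ w ∈ W, η w = 1) ∧ ∀ e : E, η (s e) * Φ e * (η (t e))⁻¹ ∉ X := by
  classical
  obtain ⟨η, hη1, hη⟩ :=
    EdgeColoring.exists_gauge_notMem hsym hsmall hloop Wᶜ.toFinset (Φ := Φ)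
      (by simpa [EdgeColoring.AvoidsOn] using hadm)
  exact ⟨η, fun w hw => hη1 w (by simpa using hw), hη⟩
end

section
/- Let G be a group and X ⊆ G a symmetric subset (X = X⁻¹) which is small in G, i.e. for every finite family g1, …, gn ∈ G the union of left translates g1X ∪ … ∪ gnX is a proper subset of G. Let A be a commutative group and let s : G \ X → A satisfy s(gg') = s(g)s(g') whenever g, g' and gg' all lie in G \ X. Then there exists a unique group homomorphism ŝ : G → A such that ŝ(g) = s(g) for every g ∈ G \ X. -/
open Pointwise

/-- Extension of multiplicative maps defined off a small symmetric set: if `X ⊆ G`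
is symmetric and small, `A` is a commutative group, and `s : G \ X → A` satisfies
`s(gg') = s(g)s(g')` whenever `g, g', gg' ∉ X`, then `s` extends uniquely to a
group homomorphism `G → A`. -/
theorem stmt2 {G A : Type*} [Group G] [CommGroup A] (X : Set G) (hsym : X⁻¹ = X)
    (hsmall : ∀ S : Finset G, (⋃ g ∈ S, g • X) ≠ Set.univ)
    (s : G → A)
    (hmul : ∀ g g' : G, g ∉ X → g' ∉ X → g * g' ∉ X → s (g * g') = s g * s g') :
    ∃! F : G →* A, ∀ g ∉ X, F g = s g := by
  classical
  have hsym' : ∀ g : G, g ∈ X ↔ g⁻¹ ∈ X := by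
    intro g; nth_rewrite 1 [← hsym]; exact Set.mem_inv
  -- we can find h with h * c ∉ X for all c in any finite set
  have hfind : ∀ S : Finset G, ∃ h : G, ∀ c ∈ S, h * c ∉ X := by
    intro S
    have h := hsmall S
    rw [Set.ne_univ_iff_exists_notMem] at h
    obtain ⟨k, hk⟩ := h
    refine ⟨k⁻¹, fun c hc hmem => ?_⟩
    apply hk
    simp only [Set.mem_iUnion]
    refine ⟨c, hc, ?_⟩
    rw [Set.mem_smul_set_iff_inv_smul_mem]
    have : (k⁻¹ * c)⁻¹ ∈ X := (hsym' _).mp hmem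
    simpa [mul_inv_rev] using this
  have hex : ∀ x : G, ∃ g : G, g ∉ X ∧ g * x ∉ X := by
    intro x
    obtain ⟨h, hh⟩ := hfind {1, x}
    exact ⟨h, by simpa using hh 1 (by simp), hh x (by simp)⟩
  set g0 : G → G := fun x => (hex x).choose with hg0def
  have hg0 : ∀ x, g0 x ∉ X ∧ g0 x * x ∉ X := fun x => (hex x).choose_spec
  set Fv : G → A := fun x => s (g0 x * x) / s (g0 x) with hFv
  -- well-definedness
  have key : ∀ (x g : G), g ∉ X → g * x ∉ X → Fv x = s (g * x) / s g := by
    intro x g hg hgx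
    obtain ⟨h, hh⟩ := hfind {1, x, g⁻¹, (g0 x)⁻¹}
    have h1 : h ∉ X := by simpa using hh 1 (by simp)
    have hx : h * x ∉ X := hh x (by simp)
    have claim : ∀ g' : G, g' ∉ X → g' * x ∉ X → h * g'⁻¹ ∉ X →
        s (g' * x) / s g' = s (h * x) / s h := by
      intro g' hg' hg'x hhg'
      have e1 : s (h * x) = s (h * g'⁻¹) * s (g' * x) := by
        have := hmul (h * g'⁻¹) (g' * x) hhg' hg'x
          (by rw [mul_assoc, inv_mul_cancel_left]; exact hx)
        rw [mul_assoc, inv_mul_cancel_left] at this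
        exact this
      have e2 : s h = s (h * g'⁻¹) * s g' := by
        have := hmul (h * g'⁻¹) g' hhg' hg'
          (by rw [inv_mul_cancel_right]; exact h1)
        rw [inv_mul_cancel_right] at this
        exact this
      rw [e1, e2, mul_div_mul_left_eq_div]
    have c1 := claim (g0 x) (hg0 x).1 (hg0 x).2 (hh (g0 x)⁻¹ (by simp))
    have c2 := claim g hg hgx (hh g⁻¹ (by simp))
    rw [hFv]
    simp only []
    rw [c1, ← c2]
  -- multiplicativity
  have hFmul : ∀ x y, Fv (x * y) = Fv x * Fv y := by
    intro x y
    obtain ⟨g, hg⟩ := hfind {1, x, x * y}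
    have h1 : g ∉ X := by simpa using hg 1 (by simp)
    have h2 : g * x ∉ X := hg x (by simp)
    have h3 : g * (x * y) ∉ X := hg (x * y) (by simp)
    rw [key (x * y) g h1 h3, key x g h1 h2,
      key y (g * x) h2 (by rw [mul_assoc]; exact h3)]
    rw [← mul_assoc, mul_comm (s (g * x) / s g), div_mul_div_cancel]
  have hone : Fv 1 = 1 := by
    have h := hFmul 1 1
    rw [mul_one] at h
    exact (left_eq_mul.mp h)
  set F : G →* A := { toFun := Fv, map_one' := hone, map_mul' := hFmul } with hFdef
  have hext : ∀ g ∉ X, F g = s g := by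
    intro g hgX
    obtain ⟨h, hh⟩ := hfind {1, g}
    have h1 : h ∉ X := by simpa using hh 1 (by simp)
    have h2 : h * g ∉ X := hh g (by simp)
    have : F g = Fv g := rfl
    rw [this, key g h h1 h2, hmul h g h1 hgX h2, mul_comm, mul_div_assoc,
      div_self', mul_one]
  refine ⟨F, hext, ?_⟩
  intro F' hF'
  ext x
  obtain ⟨g, hg, hgx⟩ := hex x
  have e : F' (g * x) = F' g * F' x := map_mul F' g x
  rw [hF' _ hgx, hF' _ hg] at e
  have hFx : F x = s (g * x) / s g := key x g hg hgx
  rw [hFx, e, mul_comm, mul_div_assoc, div_self', mul_one]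
end

section
/- Let k be a field, H a k-vector space, and δ, δ_A, δ_B pairwise commuting invertible linear endomorphisms of H. Let A, B be linear endomorphisms of H with A∘A = id, B∘B = id, A∘δ = δ_A∘A, B∘δ = δ_B∘B, A∘δ_B = δ_B∘A and B∘δ_A = δ_A∘B. Let T : H × H × H × H → k be a k-multilinear map, and for a linear endomorphism φ of H and i ∈ {1,2,3,4} write Tφ_i for the multilinear map obtained from T by precomposing with φ in the i-th argument. Assume Tδ_1 = Tδ_4, T(δ_B)_1 = Tδ_2, T(δ_A)_1 = T(δ_A)_3, T(δ_A)_2 = T(δ_B)_3, T(δ_B)_2 = T(δ_B)_4 and Tδ_3 = T(δ_A)_4. Set Re := δ∘δ_B⁻¹ and Le := δ∘δ_A⁻¹. Then: (i) B∘Re∘B = Re⁻¹; (ii) B∘A∘Re⁻¹∘A∘B = Le; (iii) T Re_1 Le_2 = T Re_3 Le_4; (iv) T Re_1 Re_2 = T Re_4; (v) T Le_1 = T Le_3 Le_4; (vi) Re ∘ (A∘Re⁻¹∘A) ∘ Le⁻¹ = id. -/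
private theorem conj_swap' {M : Type*} [Monoid M] {C x y : M} (hC : C * C = 1)
    (h : C * x = y * C) : C * y = x * C := by
  have hCr : ∀ t : M, C * (C * t) = t := fun t => by rw [← mul_assoc, hC, one_mul]
  have h1 := congrArg (fun z => C * z * C) h
  simp only [mul_assoc, hCr, hC, mul_one] at h1
  exact h1.symm

private theorem inv_swap' {M : Type*} [Monoid M] {C : M} {u u' : Mˣ} (h : C * ↑u = ↑u' * C) :
    C * ↑u⁻¹ = ↑u'⁻¹ * C := by
  have h1 := congrArg (fun z => (↑u'⁻¹ : M) * z * ↑u⁻¹) h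
  simpa [mul_assoc] using h1.symm

/-- The operator identities for the `Ψ̂`-system built from a relative `G`-spherical
category: `δ, δ_A, δ_B` are commuting invertible operators on `H`, `A, B` are
involutions interchanging them as stated, and `T` is the tetrahedral 4-linear form
satisfying the six exchange identities.  Then `Re = δ∘δ_B⁻¹` and `Le = δ∘δ_A⁻¹`
satisfy the `Ψ̂`-system axioms and `Re∘(A∘Re⁻¹∘A)∘Le⁻¹ = id`. -/
theorem stmt8 {k H : Type*} [Field k] [AddCommGroup H] [Module k H]
    (δ δA δB : (Module.End k H)ˣ)
    (hδδA : δ * δA = δA * δ) (hδδB : δ * δB = δB * δ) (hδAδB : δA * δB = δB * δA)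
    (A B : Module.End k H) (hA : A * A = 1) (hB : B * B = 1)
    (hAδ : A * (δ : Module.End k H) = (δA : Module.End k H) * A)
    (hBδ : B * (δ : Module.End k H) = (δB : Module.End k H) * B)
    (hAδB : A * (δB : Module.End k H) = (δB : Module.End k H) * A)
    (hBδA : B * (δA : Module.End k H) = (δA : Module.End k H) * B)
    (T : MultilinearMap k (fun _ : Fin 4 => H) k)
    (h14 : ∀ x y z w : H, T ![δ.val x, y, z, w] = T ![x, y, z, δ.val w])
    (hB12 : ∀ x y z w : H, T ![δB.val x, y, z, w] = T ![x, δ.val y, z, w])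
    (hA13 : ∀ x y z w : H, T ![δA.val x, y, z, w] = T ![x, y, δA.val z, w])
    (hA2B3 : ∀ x y z w : H, T ![x, δA.val y, z, w] = T ![x, y, δB.val z, w])
    (hB24 : ∀ x y z w : H, T ![x, δB.val y, z, w] = T ![x, y, z, δB.val w])
    (h3A4 : ∀ x y z w : H, T ![x, y, δ.val z, w] = T ![x, y, z, δA.val w]) :
    ∀ Re Le : (Module.End k H)ˣ, Re = δ * δB⁻¹ → Le = δ * δA⁻¹ →
      (B * (Re : Module.End k H) * B = ((Re⁻¹ : (Module.End k H)ˣ) : Module.End k H)) ∧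
      (B * A * ((Re⁻¹ : (Module.End k H)ˣ) : Module.End k H) * A * B
        = (Le : Module.End k H)) ∧
      (∀ x y z w : H, T ![Re.val x, Le.val y, z, w] = T ![x, y, Re.val z, Le.val w]) ∧
      (∀ x y z w : H, T ![Re.val x, Re.val y, z, w] = T ![x, y, z, Re.val w]) ∧
      (∀ x y z w : H, T ![Le.val x, y, z, w] = T ![x, y, Le.val z, Le.val w]) ∧
      ((Re : Module.End k H) * (A * ((Re⁻¹ : (Module.End k H)ˣ) : Module.End k H) * A) *
          ((Le⁻¹ : (Module.End k H)ˣ) : Module.End k H) = 1) := by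
  intro Re Le hRe hLe
  subst hRe hLe
  -- End-level conjugation facts
  have hBδB : B * (δB : Module.End k H) = (δ : Module.End k H) * B := conj_swap' hB hBδ
  have hBδBI : B * ((δB⁻¹ : (Module.End k H)ˣ) : Module.End k H)
      = ((δ⁻¹ : (Module.End k H)ˣ) : Module.End k H) * B := inv_swap' hBδB
  have hAδI : A * ((δ⁻¹ : (Module.End k H)ˣ) : Module.End k H)
      = ((δA⁻¹ : (Module.End k H)ˣ) : Module.End k H) * A := inv_swap' hAδ
  have hAδBI : A * ((δB⁻¹ : (Module.End k H)ˣ) : Module.End k H)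
      = ((δB⁻¹ : (Module.End k H)ˣ) : Module.End k H) * A := inv_swap' hAδB
  have hBδAI : B * ((δA⁻¹ : (Module.End k H)ˣ) : Module.End k H)
      = ((δA⁻¹ : (Module.End k H)ˣ) : Module.End k H) * B := inv_swap' hBδA
  -- right-associated versions
  have wBδ : ∀ t : Module.End k H, B * ((δ : Module.End k H) * t)
      = (δB : Module.End k H) * (B * t) := fun t => by rw [← mul_assoc, hBδ, mul_assoc]
  have wBδB : ∀ t : Module.End k H, B * ((δB : Module.End k H) * t)
      = (δ : Module.End k H) * (B * t) := fun t => by rw [← mul_assoc, hBδB, mul_assoc]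
  have wBδBI : ∀ t : Module.End k H,
      B * (((δB⁻¹ : (Module.End k H)ˣ) : Module.End k H) * t)
      = ((δ⁻¹ : (Module.End k H)ˣ) : Module.End k H) * (B * t) := fun t => by
    rw [← mul_assoc, hBδBI, mul_assoc]
  have wAδI : ∀ t : Module.End k H,
      A * (((δ⁻¹ : (Module.End k H)ˣ) : Module.End k H) * t)
      = ((δA⁻¹ : (Module.End k H)ˣ) : Module.End k H) * (A * t) := fun t => by
    rw [← mul_assoc, hAδI, mul_assoc]
  have wAδB : ∀ t : Module.End k H, A * ((δB : Module.End k H) * t)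
      = (δB : Module.End k H) * (A * t) := fun t => by rw [← mul_assoc, hAδB, mul_assoc]
  have wBδAI : ∀ t : Module.End k H,
      B * (((δA⁻¹ : (Module.End k H)ˣ) : Module.End k H) * t)
      = ((δA⁻¹ : (Module.End k H)ˣ) : Module.End k H) * (B * t) := fun t => by
    rw [← mul_assoc, hBδAI, mul_assoc]
  have wA : ∀ t : Module.End k H, A * (A * t) = t := fun t => by
    rw [← mul_assoc, hA, one_mul]
  -- pointwise cancellation
  have canc : ∀ (u : (Module.End k H)ˣ) (v : H), u.val ((u⁻¹ : (Module.End k H)ˣ).val v) = v := by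
    intro u v
    have h : ((u : Module.End k H) * ((u⁻¹ : (Module.End k H)ˣ) : Module.End k H)) v
        = (1 : Module.End k H) v := by rw [Units.mul_inv]
    rw [Module.End.mul_apply, Module.End.one_apply] at h
    exact h
  -- pointwise commutations
  have commδδA : ∀ v : H, δ.val (δA.val v) = δA.val (δ.val v) := by
    intro v
    have h : ((δ * δA : (Module.End k H)ˣ) : Module.End k H) v
        = ((δA * δ : (Module.End k H)ˣ) : Module.End k H) v := by rw [hδδA]
    simp only [Units.val_mul, Module.End.mul_apply] at h
    exact h
  have key1 : ∀ v : H, δA.val (δ.val ((δA⁻¹ : (Module.End k H)ˣ).val v)) = δ.val v := by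
    intro v
    rw [← commδδA, canc]
  have cδδBI : Commute δ δB⁻¹ := Commute.inv_right hδδB
  have key2 : ∀ v : H, (δB⁻¹ : (Module.End k H)ˣ).val (δ.val v)
      = δ.val ((δB⁻¹ : (Module.End k H)ˣ).val v) := by
    intro v
    have h : ((δB⁻¹ * δ : (Module.End k H)ˣ) : Module.End k H) v
        = ((δ * δB⁻¹ : (Module.End k H)ˣ) : Module.End k H) v := by rw [cδδBI.eq]
    simp only [Units.val_mul, Module.End.mul_apply] at h
    exact h
  refine ⟨?_, ?_, ?_, ?_, ?_, ?_⟩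
  · -- (i)
    simp only [mul_inv_rev, inv_inv, Units.val_mul, mul_assoc]
    rw [wBδ, wBδBI, hB, mul_one]
  · -- (ii)
    simp only [mul_inv_rev, inv_inv, Units.val_mul, mul_assoc]
    rw [wAδB, wAδI, wA, wBδB, wBδAI, hB, mul_one]
  · -- (iii)
    intro x y z w
    simp only [Units.val_mul, Module.End.mul_apply]
    calc T ![δ.val ((δB⁻¹ : (Module.End k H)ˣ).val x),
            δ.val ((δA⁻¹ : (Module.End k H)ˣ).val y), z, w]
        = T ![(δB⁻¹ : (Module.End k H)ˣ).val x,
            δ.val ((δA⁻¹ : (Module.End k H)ˣ).val y), z, δ.val w] := h14 _ _ _ _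
      _ = T ![x, (δA⁻¹ : (Module.End k H)ˣ).val y, z, δ.val w] := by
          have h := hB12 ((δB⁻¹ : (Module.End k H)ˣ).val x)
            ((δA⁻¹ : (Module.End k H)ˣ).val y) z (δ.val w)
          rw [canc δB x] at h
          exact h.symm
      _ = T ![x, y, (δB⁻¹ : (Module.End k H)ˣ).val z, δ.val w] := by
          have h := hA2B3 x ((δA⁻¹ : (Module.End k H)ˣ).val y)
            ((δB⁻¹ : (Module.End k H)ˣ).val z) (δ.val w)
          rw [canc δA y, canc δB z] at h
          exact h.symm
      _ = T ![x, y, δ.val ((δB⁻¹ : (Module.End k H)ˣ).val z),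
            δ.val ((δA⁻¹ : (Module.End k H)ˣ).val w)] := by
          have h := h3A4 x y ((δB⁻¹ : (Module.End k H)ˣ).val z)
            (δ.val ((δA⁻¹ : (Module.End k H)ˣ).val w))
          rw [key1 w] at h
          exact h.symm
  · -- (iv)
    intro x y z w
    simp only [Units.val_mul, Module.End.mul_apply]
    calc T ![δ.val ((δB⁻¹ : (Module.End k H)ˣ).val x),
            δ.val ((δB⁻¹ : (Module.End k H)ˣ).val y), z, w]
        = T ![(δB⁻¹ : (Module.End k H)ˣ).val x,
            δ.val ((δB⁻¹ : (Module.End k H)ˣ).val y), z, δ.val w] := h14 _ _ _ _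
      _ = T ![x, (δB⁻¹ : (Module.End k H)ˣ).val y, z, δ.val w] := by
          have h := hB12 ((δB⁻¹ : (Module.End k H)ˣ).val x)
            ((δB⁻¹ : (Module.End k H)ˣ).val y) z (δ.val w)
          rw [canc δB x] at h
          exact h.symm
      _ = T ![x, y, z, (δB⁻¹ : (Module.End k H)ˣ).val (δ.val w)] := by
          have h := hB24 x ((δB⁻¹ : (Module.End k H)ˣ).val y) z
            ((δB⁻¹ : (Module.End k H)ˣ).val (δ.val w))
          rw [canc δB y, canc δB (δ.val w)] at h
          exact h.symm
      _ = T ![x, y, z, δ.val ((δB⁻¹ : (Module.End k H)ˣ).val w)] := by rw [key2 w]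
  · -- (v)
    intro x y z w
    simp only [Units.val_mul, Module.End.mul_apply]
    calc T ![δ.val ((δA⁻¹ : (Module.End k H)ˣ).val x), y, z, w]
        = T ![(δA⁻¹ : (Module.End k H)ˣ).val x, y, z, δ.val w] := h14 _ _ _ _
      _ = T ![x, y, (δA⁻¹ : (Module.End k H)ˣ).val z, δ.val w] := by
          have h := hA13 ((δA⁻¹ : (Module.End k H)ˣ).val x) y
            ((δA⁻¹ : (Module.End k H)ˣ).val z) (δ.val w)
          rw [canc δA x, canc δA z] at h
          exact h.symm
      _ = T ![x, y, δ.val ((δA⁻¹ : (Module.End k H)ˣ).val z),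
            δ.val ((δA⁻¹ : (Module.End k H)ˣ).val w)] := by
          have h := h3A4 x y ((δA⁻¹ : (Module.End k H)ˣ).val z)
            (δ.val ((δA⁻¹ : (Module.End k H)ˣ).val w))
          rw [key1 w] at h
          exact h.symm
  · -- (vi)
    simp only [mul_inv_rev, inv_inv, Units.val_mul, mul_assoc]
    rw [wAδB, wAδI, wA]
    simp [← mul_assoc]
end
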